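/- If θ ↦ w_s(θ)·w_g(θ) is monotone nonincreasing on [0, π], then the supremum of SINR over all of ℝ² equals its supremum over the central cell: for every (x,y) ∈ ℝ² there exists (x',y') with |x'| ≤ Δ/2 and |y'| ≤ √3Δ/2 such that SINR(x',y') ≥ SINR(x,y). -/

import Mathlib

open Real

/-- Distance from ground point `(x, y, 0)` to satellite `s_{i,j} = (iΔ/2, j√3Δ/2, h)`. -/
noncomputable def Dfun (Δ h : ℝ) (i j : ℤ) (x y : ℝ) : ℝ :=
  Real.sqrt ((x - i * Δ / 2) ^ 2 + (y - j * Real.sqrt 3 * Δ / 2) ^ 2 + h ^ 2)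

/-- Off-axis angle `θ_{i,j}(x,y) = arccos(h / D_{i,j}(x,y))`. -/
noncomputable def θfun (Δ h : ℝ) (i j : ℤ) (x y : ℝ) : ℝ :=
  Real.arccos (h / Dfun Δ h i j x y)

/-- Combined beam attenuation `W_{i,j}(x,y) = w_s(θ_{i,j}(x,y))·w_g(θ_{i,j}(x,y))`. -/
noncomputable def Wfun (ws wg : ℝ → ℝ) (Δ h : ℝ) (i j : ℤ) (x y : ℝ) : ℝ :=
  ws (θfun Δ h i j x y) * wg (θfun Δ h i j x y)

/-- Signal-to-noise ratio at the ground point `(x, y)`, served by satellite `s_{0,0}`. -/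
noncomputable def SNR (ws wg : ℝ → ℝ) (Δ h α p σ2 : ℝ) (x y : ℝ) : ℝ :=
  (p / σ2) * Dfun Δ h 0 0 x y ^ (-α) * Wfun ws wg Δ h 0 0 x y

/-- Interference-to-noise ratio at the ground point `(x, y)`: sum over all satellites
`(i,j)` with `i ≡ j (mod 2)` other than `(0,0)`. -/
noncomputable def INR (ws wg : ℝ → ℝ) (Δ h α p σ2 : ℝ) (x y : ℝ) : ℝ :=
  (p / σ2) * ∑' q : ℤ × ℤ,
    if q.1 % 2 = q.2 % 2 ∧ q ≠ (0, 0) then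
      Dfun Δ h q.1 q.2 x y ^ (-α) * Wfun ws wg Δ h q.1 q.2 x y
    else 0

/-- `SINR(x,y) = SNR(x,y) / (INR(x,y) + 1)`. -/
noncomputable def SINR (ws wg : ℝ → ℝ) (Δ h α p σ2 : ℝ) (x y : ℝ) : ℝ :=
  SNR ws wg Δ h α p σ2 x y / (INR ws wg Δ h α p σ2 x y + 1)

/-!
Translating the terminal by a vector of the sublattice `ΔZ × √3ΔZ` only relabels the satellites:
the terminal at `(x - kΔ, y - l√3Δ)` sees `s_{0,0}` exactly as `(x, y)` sees `s_{2k,2l}`. So the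
total received power `S` is unchanged and only the serving term `g` moves; with `a = p / σ²`,
`SINR = a g / (a (S - g) + 1)` is increasing in `g`. Rounding `x / Δ` and `y / (√3Δ)` to integers
`k, l` lands in the central cell and makes `s_{2k,2l}` at least as close to `(x, y)` as `s_{0,0}`,
hence (`α ≥ 0`, nonincreasing gain) at least as strong.
-/

lemma div_sub_add_one_le_div_sub_add_one {a s t S : ℝ} (ha : 0 ≤ a) (hs : 0 ≤ s) (hst : s ≤ t)
    (htS : t ≤ S) : a * s / (a * (S - s) + 1) ≤ a * t / (a * (S - t) + 1) := by
  have hpos : 0 < a * (S - t) + 1 := by nlinarith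
  rw [div_le_div_iff₀ (by nlinarith) hpos]
  nlinarith [mul_nonneg (mul_nonneg ha (sub_nonneg.2 hst)) (by nlinarith : 0 ≤ a * S + 1)]

lemma exists_int_abs_sub_mul_le {c : ℝ} (hc : 0 < c) (x : ℝ) :
    ∃ k : ℤ, |x - k * c| ≤ c / 2 ∧ |x - k * c| ≤ |x| := by
  have hx : x - round (x / c) * c = c * (x / c - round (x / c)) := by field_simp
  refine ⟨round (x / c), ?_, ?_⟩ <;> rw [hx, abs_mul, abs_of_pos hc]
  · nlinarith [abs_sub_round (x / c)]
  · have := round_le (x / c) 0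
    rw [Int.cast_zero, sub_zero, abs_div, abs_of_pos hc] at this
    calc c * |x / c - round (x / c)| ≤ c * (|x| / c) := by gcongr
      _ = |x| := by field_simp

section Geometry

variable (Δ : ℝ) {h : ℝ}

lemma le_Dfun (i j : ℤ) (x y : ℝ) : h ≤ Dfun Δ h i j x y :=
  Real.le_sqrt_of_sq_le (by nlinarith [sq_nonneg (x - i * Δ / 2), sq_nonneg (y - j * √3 * Δ / 2)])

lemma Dfun_pos (hh : 0 < h) (i j : ℤ) (x y : ℝ) : 0 < Dfun Δ h i j x y :=
  hh.trans_le (le_Dfun Δ i j x y)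

lemma Dfun_sub_lattice (i j k l : ℤ) (x y : ℝ) :
    Dfun Δ h i j (x - k * Δ) (y - l * (√3 * Δ)) = Dfun Δ h (i + 2 * k) (j + 2 * l) x y := by
  unfold Dfun
  push_cast
  ring_nf

lemma Dfun_zero_le_of_abs_le {x y x' y' : ℝ} (hx : |x'| ≤ |x|) (hy : |y'| ≤ |y|) :
    Dfun Δ h 0 0 x' y' ≤ Dfun Δ h 0 0 x y := by
  unfold Dfun
  have := sq_le_sq.2 hx
  have := sq_le_sq.2 hy
  apply Real.sqrt_le_sqrt
  simp only [Int.cast_zero, zero_mul, zero_div, sub_zero]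
  linarith

lemma θfun_sub_lattice (i j k l : ℤ) (x y : ℝ) :
    θfun Δ h i j (x - k * Δ) (y - l * (√3 * Δ)) = θfun Δ h (i + 2 * k) (j + 2 * l) x y := by
  rw [θfun, Dfun_sub_lattice, θfun]

lemma θfun_mem_Icc (i j : ℤ) (x y : ℝ) : θfun Δ h i j x y ∈ Set.Icc 0 π :=
  ⟨arccos_nonneg _, arccos_le_pi _⟩

lemma θfun_le_θfun (hh : 0 < h) {i j i' j' : ℤ} {x y x' y' : ℝ}
    (hD : Dfun Δ h i j x y ≤ Dfun Δ h i' j' x' y') :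
    θfun Δ h i j x y ≤ θfun Δ h i' j' x' y' :=
  arccos_le_arccos (div_le_div_of_nonneg_left hh.le (Dfun_pos Δ hh i j x y) hD)

end Geometry

section Power

variable (ws wg : ℝ → ℝ) (Δ h α : ℝ)

lemma Wfun_sub_lattice (i j k l : ℤ) (x y : ℝ) :
    Wfun ws wg Δ h i j (x - k * Δ) (y - l * (√3 * Δ)) =
      Wfun ws wg Δ h (i + 2 * k) (j + 2 * l) x y := by
  rw [Wfun, θfun_sub_lattice, Wfun]

/-- Received power from satellite `q`; indices with `q.1 ≢ q.2 mod 2` carry no satellite and get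
`0`, so that the lattice sums below run over all of `ℤ × ℤ`. -/
noncomputable def rxPower (x y : ℝ) (q : ℤ × ℤ) : ℝ :=
  if q.1 % 2 = q.2 % 2 then Dfun Δ h q.1 q.2 x y ^ (-α) * Wfun ws wg Δ h q.1 q.2 x y else 0

lemma rxPower_sub_lattice (k l : ℤ) (x y : ℝ) (q : ℤ × ℤ) :
    rxPower ws wg Δ h α (x - k * Δ) (y - l * (√3 * Δ)) q =
      rxPower ws wg Δ h α x y (q + (2 * k, 2 * l)) := by
  obtain ⟨i, j⟩ := q
  have hpar : (i + 2 * k) % 2 = (j + 2 * l) % 2 ↔ i % 2 = j % 2 := by omega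
  simp only [rxPower, Prod.mk_add_mk, hpar, Dfun_sub_lattice, Wfun_sub_lattice]

lemma tsum_rxPower_sub_lattice (k l : ℤ) (x y : ℝ) :
    ∑' q, rxPower ws wg Δ h α (x - k * Δ) (y - l * (√3 * Δ)) q =
      ∑' q, rxPower ws wg Δ h α x y q := by
  simp only [rxPower_sub_lattice]
  exact (Equiv.addRight (2 * k, 2 * l)).tsum_eq (rxPower ws wg Δ h α x y)

lemma interference_eq_update (x y : ℝ) :
    (fun q : ℤ × ℤ => if q.1 % 2 = q.2 % 2 ∧ q ≠ (0, 0) then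
        Dfun Δ h q.1 q.2 x y ^ (-α) * Wfun ws wg Δ h q.1 q.2 x y else 0) =
      Function.update (rxPower ws wg Δ h α x y) (0, 0) 0 := by
  ext q
  by_cases hq : q = (0, 0)
  · simp [hq]
  · simp [hq, rxPower, Function.update_of_ne]

section Summable

variable {x y : ℝ} (hsum : Summable fun q : ℤ × ℤ =>
  if q.1 % 2 = q.2 % 2 ∧ q ≠ (0, 0) then
    Dfun Δ h q.1 q.2 x y ^ (-α) * Wfun ws wg Δ h q.1 q.2 x y else 0)
include hsum

lemma summable_rxPower : Summable (rxPower ws wg Δ h α x y) := by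
  rw [interference_eq_update] at hsum
  simpa only [Function.update_idem, Function.update_eq_self] using
    hsum.update (0, 0) (rxPower ws wg Δ h α x y (0, 0))

lemma SINR_eq (p σ2 : ℝ) :
    SINR ws wg Δ h α p σ2 x y =
      p / σ2 * rxPower ws wg Δ h α x y (0, 0) /
        (p / σ2 * (∑' q, rxPower ws wg Δ h α x y q - rxPower ws wg Δ h α x y (0, 0)) + 1) := by
  have hg := summable_rxPower ws wg Δ h α hsum
  have hINR : INR ws wg Δ h α p σ2 x y =
      p / σ2 * (∑' q, rxPower ws wg Δ h α x y q - rxPower ws wg Δ h α x y (0, 0)) := by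
    rw [INR, interference_eq_update, (hg.hasSum.update (0, 0) 0).tsum_eq]
    ring
  rw [SINR, hINR, SNR]
  simp [rxPower, mul_assoc]

end Summable

variable {ws wg Δ h α}

lemma rxPower_nonneg (hh : 0 < h) (hws : ∀ θ ∈ Set.Icc 0 π, 0 ≤ ws θ)
    (hwg : ∀ θ ∈ Set.Icc 0 π, 0 ≤ wg θ) (x y : ℝ) (q : ℤ × ℤ) :
    0 ≤ rxPower ws wg Δ h α x y q := by
  unfold rxPower Wfun
  split_ifs
  · exact mul_nonneg (rpow_nonneg (Dfun_pos Δ hh _ _ _ _).le _)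
      (mul_nonneg (hws _ (θfun_mem_Icc ..)) (hwg _ (θfun_mem_Icc ..)))
  · exact le_rfl

lemma rxPower_le_rxPower_of_Dfun_le (hh : 0 < h) (hα : 0 ≤ α)
    (hws : ∀ θ ∈ Set.Icc 0 π, 0 ≤ ws θ) (hwg : ∀ θ ∈ Set.Icc 0 π, 0 ≤ wg θ)
    (hmono : AntitoneOn (fun θ => ws θ * wg θ) (Set.Icc 0 π)) {x y : ℝ} {q q' : ℤ × ℤ}
    (hq : q.1 % 2 = q.2 % 2) (hq' : q'.1 % 2 = q'.2 % 2)
    (hD : Dfun Δ h q.1 q.2 x y ≤ Dfun Δ h q'.1 q'.2 x y) :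
    rxPower ws wg Δ h α x y q' ≤ rxPower ws wg Δ h α x y q := by
  have hW : Wfun ws wg Δ h q'.1 q'.2 x y ≤ Wfun ws wg Δ h q.1 q.2 x y :=
    hmono (θfun_mem_Icc ..) (θfun_mem_Icc ..) (θfun_le_θfun Δ hh hD)
  have hDα : Dfun Δ h q'.1 q'.2 x y ^ (-α) ≤ Dfun Δ h q.1 q.2 x y ^ (-α) :=
    rpow_le_rpow_of_nonpos (Dfun_pos Δ hh ..) hD (neg_nonpos.2 hα)
  rw [rxPower, if_pos hq', rxPower, if_pos hq]
  exact mul_le_mul hDα hW (mul_nonneg (hws _ (θfun_mem_Icc ..)) (hwg _ (θfun_mem_Icc ..)))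
    (rpow_nonneg (Dfun_pos Δ hh ..).le _)

end Power

/-- Lemma 1: the supremum of the SINR over the plane equals its supremum over the
central cell: any ground point is dominated by some point of the central cell. -/
theorem sinr_sup_over_central_cell
    (ws wg : ℝ → ℝ) (Δ h α p σ2 : ℝ)
    (hΔ : 0 < Δ) (hh : 0 < h) (hα : 2 ≤ α) (hp : 0 < p) (hσ : 0 < σ2)
    (hwsnn : ∀ θ ∈ Set.Icc (0 : ℝ) π, 0 ≤ ws θ)
    (hwgnn : ∀ θ ∈ Set.Icc (0 : ℝ) π, 0 ≤ wg θ)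
    (hsum : ∀ x y : ℝ, Summable fun q : ℤ × ℤ =>
      if q.1 % 2 = q.2 % 2 ∧ q ≠ (0, 0) then
        Dfun Δ h q.1 q.2 x y ^ (-α) * Wfun ws wg Δ h q.1 q.2 x y
      else 0)
    (hmono : AntitoneOn (fun θ => ws θ * wg θ) (Set.Icc (0 : ℝ) π)) :
    ∀ x y : ℝ, ∃ x' y' : ℝ, |x'| ≤ Δ / 2 ∧ |y'| ≤ Real.sqrt 3 * Δ / 2 ∧
      SINR ws wg Δ h α p σ2 x y ≤ SINR ws wg Δ h α p σ2 x' y' := by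
  intro x y
  obtain ⟨k, hk, hkx⟩ := exists_int_abs_sub_mul_le hΔ x
  obtain ⟨l, hl, hly⟩ := exists_int_abs_sub_mul_le (by positivity : 0 < √3 * Δ) y
  refine ⟨x - k * Δ, y - l * (√3 * Δ), hk, hl, ?_⟩
  have hg := summable_rxPower ws wg Δ h α (hsum x y)
  have hnonneg := rxPower_nonneg (Δ := Δ) (α := α) hh hwsnn hwgnn x y
  have hc : (0 + 2 * k) % 2 = (0 + 2 * l) % 2 := by omega
  have hcloser : Dfun Δ h (0 + 2 * k) (0 + 2 * l) x y ≤ Dfun Δ h 0 0 x y := by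
    rw [← Dfun_sub_lattice]
    exact Dfun_zero_le_of_abs_le Δ hkx hly
  rw [SINR_eq ws wg Δ h α (hsum x y), SINR_eq ws wg Δ h α (hsum _ _), tsum_rxPower_sub_lattice,
    rxPower_sub_lattice]
  exact div_sub_add_one_le_div_sub_add_one (by positivity) (hnonneg _)
    (rxPower_le_rxPower_of_Dfun_le hh (by linarith) hwsnn hwgnn hmono hc rfl hcloser)
    (hg.le_tsum _ fun q _ => hnonneg q)
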